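/- arXiv:1105.4137 — 2 statements merged into one kernel-verified Lean document; each statement's English description precedes it below -/
import Mathlib

section
/- Let u be a smooth function on an open subset of ℝ^{1+3} contained in {(t,x) : t > |x| > 0}, and let (t,x) be a point of this set; set T = √(t² − |x|²), r = |x|, ∂̄_i u = ∂_i u + (x^i/t)∂_t u and ∂̸_i u = ∂_i u + (x^i/r)∂_t u. Then Σ_{i=1}³ |∂̸_i u|² ≤ 2 Σ_{i=1}³ |∂̄_i u|² + 2 ((T/t) ∂_t u)². In particular the tangential (to the light cone) derivatives are controlled pointwise by the hyperboloidal energy density. -/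
open MeasureTheory

noncomputable section

/-- The partial derivative `∂_α` on `ℝ^{1+3}`; index `0` is the time variable `t`. -/
def pd (α : Fin 4) (u : (Fin 4 → ℝ) → ℝ) : (Fin 4 → ℝ) → ℝ :=
  fun p => fderiv ℝ u p (Pi.single α 1)

/-- The Euclidean length `r = |x|` of the spatial part of a point of `ℝ^{1+3}`. -/
def rad (p : Fin 4 → ℝ) : ℝ := Real.sqrt (∑ i : Fin 3, p i.succ ^ 2)

/-- The Lorentz boost `H_j = t ∂_j + x^j ∂_t`. -/
def Lb (j : Fin 3) (u : (Fin 4 → ℝ) → ℝ) : (Fin 4 → ℝ) → ℝ :=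
  fun p => p 0 * pd j.succ u p + p j.succ * pd 0 u p

/-- The wave operator `□ = ∂_t² - Σ_i ∂_i²`. -/
def box (u : (Fin 4 → ℝ) → ℝ) : (Fin 4 → ℝ) → ℝ :=
  fun p => pd 0 (pd 0 u) p - ∑ i : Fin 3, pd i.succ (pd i.succ u) p

/-- The point `(√(T²+|x|²), x)` of the hyperboloid `H_T` over `x ∈ ℝ³`. -/
def hyp (T : ℝ) (x : Fin 3 → ℝ) : Fin 4 → ℝ :=
  Fin.cons (Real.sqrt (T ^ 2 + ∑ i, x i ^ 2)) x

/-- The hyperboloidal energy `E_m(T,u)` with mass parameter `a`. -/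
def Em (a T : ℝ) (u : (Fin 4 → ℝ) → ℝ) : ℝ :=
  ∫ x : Fin 3 → ℝ,
    ((pd 0 u (hyp T x)) ^ 2 + ∑ i : Fin 3, (pd i.succ u (hyp T x)) ^ 2
      + ∑ i : Fin 3,
          (2 * (hyp T x) i.succ / (hyp T x) 0) * pd 0 u (hyp T x) * pd i.succ u (hyp T x)
      + 2 * a ^ 2 * (u (hyp T x)) ^ 2)

/-!
Write `∂̸_i u = ∂̄_i u + x^i (1/r - 1/t) ∂_t u` and use `(A + B)² ≤ 2A² + 2B²` termwise.
Since `Σ (x^i)² = r²`, the error terms sum to `((1 - r/t) ∂_t u)²`, and `(1 - s)² ≤ 1 - s²` for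
`s = r/t ∈ [0, 1]` bounds this by `((T/t) ∂_t u)²`, because `T²/t² = 1 - r²/t²`.
-/

theorem sum_add_sq_le {ι : Type*} [Fintype ι] (f g : ι → ℝ) :
    ∑ i, (f i + g i) ^ 2 ≤ 2 * ∑ i, f i ^ 2 + 2 * ∑ i, g i ^ 2 :=
  calc ∑ i, (f i + g i) ^ 2 ≤ ∑ i, 2 * (f i ^ 2 + g i ^ 2) :=
        Finset.sum_le_sum fun _ _ => add_sq_le
    _ = 2 * ∑ i, f i ^ 2 + 2 * ∑ i, g i ^ 2 := by
      rw [← Finset.mul_sum, Finset.sum_add_distrib, mul_add]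

theorem one_sub_sq_le_one_sub_sq {s : ℝ} (h₀ : 0 ≤ s) (h₁ : s ≤ 1) :
    (1 - s) ^ 2 ≤ 1 - s ^ 2 := by
  nlinarith

theorem sum_sq_add_div_mul_le {ι : Type*} [Fintype ι] (a x : ι → ℝ) {b r t : ℝ}
    (hx : ∑ i, x i ^ 2 = r ^ 2) (hr : 0 < r) (hrt : r ≤ t) :
    ∑ i, (a i + x i / r * b) ^ 2
      ≤ 2 * ∑ i, (a i + x i / t * b) ^ 2 + 2 * (Real.sqrt (t ^ 2 - r ^ 2) / t * b) ^ 2 := by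
  have ht : 0 < t := hr.trans_le hrt
  have h_error : ∑ i, (x i * ((1 / r - 1 / t) * b)) ^ 2 = ((1 - r / t) * b) ^ 2 := by
    simp only [mul_pow, ← Finset.sum_mul, hx]
    field_simp
  have h_energy : (Real.sqrt (t ^ 2 - r ^ 2) / t * b) ^ 2 = (1 - (r / t) ^ 2) * b ^ 2 := by
    rw [mul_pow, div_pow, Real.sq_sqrt (by nlinarith)]
    field_simp
  calc ∑ i, (a i + x i / r * b) ^ 2
      = ∑ i, ((a i + x i / t * b) + x i * ((1 / r - 1 / t) * b)) ^ 2 := by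
        congr! 2 with i; ring
    _ ≤ 2 * ∑ i, (a i + x i / t * b) ^ 2 + 2 * ((1 - r / t) * b) ^ 2 :=
        h_error ▸ sum_add_sq_le _ _
    _ ≤ 2 * ∑ i, (a i + x i / t * b) ^ 2 + 2 * (Real.sqrt (t ^ 2 - r ^ 2) / t * b) ^ 2 := by
        rw [h_energy, mul_pow]
        gcongr
        exact one_sub_sq_le_one_sub_sq (by positivity) ((div_le_one ht).mpr hrt)

theorem sum_sq_succ_eq_rad_sq (p : Fin 4 → ℝ) : ∑ i : Fin 3, p i.succ ^ 2 = rad p ^ 2 :=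
  (Real.sq_sqrt (by positivity)).symm

theorem lightcone_tangential_controlled_by_energy_density_general
    (U : Set (Fin 4 → ℝ))
    (hreg : U ⊆ {p | 0 < rad p ∧ rad p < p 0})
    (u : (Fin 4 → ℝ) → ℝ)
    (p : Fin 4 → ℝ) (hp : p ∈ U) :
    ∑ i : Fin 3, (pd i.succ u p + (p i.succ / rad p) * pd 0 u p) ^ 2
      ≤ 2 * ∑ i : Fin 3, (pd i.succ u p + (p i.succ / p 0) * pd 0 u p) ^ 2
        + 2 * ((Real.sqrt ((p 0) ^ 2 - rad p ^ 2) / p 0) * pd 0 u p) ^ 2 := by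
  obtain ⟨hr, hrt⟩ := hreg hp
  exact sum_sq_add_div_mul_le (fun i : Fin 3 => pd i.succ u p) (fun i => p i.succ)
    (sum_sq_succ_eq_rad_sq p) hr hrt.le

/-- the light-cone-tangential derivatives `∂̸_i u = ∂_i u + (x^i/r) ∂_t u`
are controlled pointwise by the hyperboloidal energy density:
`Σ_i |∂̸_i u|² ≤ 2 Σ_i |∂̄_i u|² + 2 ((T/t) ∂_t u)²` on `{t > |x| > 0}`. -/
theorem lightcone_tangential_controlled_by_energy_density
    (U : Set (Fin 4 → ℝ)) (hU : IsOpen U)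
    (hreg : U ⊆ {p | 0 < rad p ∧ rad p < p 0})
    (u : (Fin 4 → ℝ) → ℝ) (hu : ContDiffOn ℝ (⊤ : ℕ∞) u U)
    (p : Fin 4 → ℝ) (hp : p ∈ U) :
    ∑ i : Fin 3, (pd i.succ u p + (p i.succ / rad p) * pd 0 u p) ^ 2
      ≤ 2 * ∑ i : Fin 3, (pd i.succ u p + (p i.succ / p 0) * pd 0 u p) ^ 2
        + 2 * ((Real.sqrt ((p 0) ^ 2 - rad p ^ 2) / p 0) * pd 0 u p) ^ 2 :=
  lightcone_tangential_controlled_by_energy_density_general U hreg u p hp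
end
end

section
/- Fix B > 0 and p ≥ 1. There exists a constant C = C(p,B) > 0 such that for every smooth function u on an open subset of ℝ^{1+3} and every point (t,x) of the domain satisfying |x| ≤ t − 1 and t² − |x|² ≥ (B+1)²: (a) Σ_{i=1}³ Σ_{|J| = p} |Z^J ∂̄_i u| ≤ C Σ_{|K| ≤ p} Σ_{j=1}³ |∂̄_j Z^K u|, where ∂̄_i u = ∂_i u + (x^i/t)∂_t u; (b) for every sequence I with |I| ≤ p and every α ∈ {0,1,2,3}: |Z^I ∂_α u| ≤ |∂_α Z^I u| + C Σ_{|J| < |I|} Σ_{β=0}³ |∂_β Z^J u|. Here the sums run over finite sequences of indices in {1,…,7} of the indicated lengths. -/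
open MeasureTheory

noncomputable section

/-- The admissible fields `Z`: the coordinate derivatives `∂_α` (`Sum.inl α`)
and the Lorentz boosts `H_j` (`Sum.inr j`). -/
def Zop (z : Fin 4 ⊕ Fin 3) (u : (Fin 4 → ℝ) → ℝ) : (Fin 4 → ℝ) → ℝ :=
  match z with
  | Sum.inl α => pd α u
  | Sum.inr j => Lb j u

/-- The iterated field `Z^I` for a finite sequence `I`. -/
def ZI : List (Fin 4 ⊕ Fin 3) → ((Fin 4 → ℝ) → ℝ) → ((Fin 4 → ℝ) → ℝ)
  | [], u => u
  | z :: I, u => Zop z (ZI I u)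

/-- The hyperboloid-tangential derivative `∂̄_i u = ∂_i u + (x^i/t)∂_t u`, as an
operator on functions. -/
def db (i : Fin 3) (u : (Fin 4 → ℝ) → ℝ) : (Fin 4 → ℝ) → ℝ :=
  fun p => pd i.succ u p + (p i.succ / p 0) * pd 0 u p

/-! Commuting a field `Z` past `∂_α` costs only lower-order terms, since `[H_j, ∂_α]` is a
constant-coefficient combination of `∂_0` and `∂_j`. Commuting `Z` past `∂̄_i` produces
combinations of `∂̄_j` and `t⁻¹ ∂_t` whose coefficients lie in the algebra generated by `t⁻¹`
and `x^b/t`; this algebra is closed under every `Z` and bounded on `|x| ≤ t`, `t ≥ 1`. So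
`Z^J ∂̄_i u` is a `u`-independent combination of `∂̄_j Z^K u` (`|K| ≤ |J|`) and
`t⁻¹ ∂_t Z^K u` (`|K| < |J|`), and the latter is controlled by the tangential derivatives
`∂̄_b H_b`, `∂̄_b`, `∂̄_b ∂_b`, `∂̄_b ∂_t` of `Z^K u` through the identity
`(1 - (x^b/t)²) t⁻¹ ∂_t = t⁻¹ ∂̄_b H_b - t⁻¹ (x^b/t) ∂̄_b - ∂̄_b ∂_b - (x^b/t) ∂̄_b ∂_t`
summed over `b`, where the coefficient `3 - |x|²/t²` is at least `2`. -/

open scoped ContDiff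

namespace ZCommutator

abbrev Fn := (Fin 4 → ℝ) → ℝ

abbrev Op := Fn → Fn

def timePos : Set (Fin 4 → ℝ) := {p | 0 < p 0}

def tInv : Fn := fun p => (p 0)⁻¹

def xOverT (b : Fin 3) : Fn := fun p => p b.succ / p 0

def futureCone : Set (Fin 4 → ℝ) := {p | 1 ≤ p 0 ∧ ∑ i : Fin 3, p i.succ ^ 2 ≤ p 0 ^ 2}

def invTDt (w : Fn) : Fn := fun p => tInv p * pd 0 w p

lemma isOpen_timePos : IsOpen timePos :=
  isOpen_lt continuous_const (continuous_apply 0)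

lemma contDiffOn_tInv : ContDiffOn ℝ ∞ tInv timePos :=
  (contDiff_apply ℝ ℝ 0).contDiffOn.inv fun _ hp => hp.ne'

lemma contDiffOn_xOverT (b : Fin 3) : ContDiffOn ℝ ∞ (xOverT b) timePos :=
  (contDiff_apply ℝ ℝ b.succ).contDiffOn.div (contDiff_apply ℝ ℝ 0).contDiffOn fun _ hp => hp.ne'

section Cone

variable {p : Fin 4 → ℝ} (hp : p ∈ futureCone)
include hp

lemma pos_of_mem_futureCone : 0 < p 0 := one_pos.trans_le hp.1

lemma abs_tInv_le_one : |tInv p| ≤ 1 := by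
  rw [tInv, abs_inv, abs_of_pos (pos_of_mem_futureCone hp)]
  exact inv_le_one_of_one_le₀ hp.1

lemma sum_sq_xOverT_le_one : ∑ b : Fin 3, xOverT b p ^ 2 ≤ 1 := by
  simp only [xOverT, div_pow, ← Finset.sum_div]
  exact div_le_one_of_le₀ hp.2 (sq_nonneg _)

lemma abs_xOverT_le_one (b : Fin 3) : |xOverT b p| ≤ 1 := by
  have hb : xOverT b p ^ 2 ≤ 1 :=
    (Finset.single_le_sum (fun i _ => sq_nonneg (xOverT i p)) (Finset.mem_univ b)).trans
      (sum_sq_xOverT_le_one hp)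
  exact abs_le_one_iff_mul_self_le_one.mpr (by nlinarith)

end Cone

section Smooth

variable {V : Set (Fin 4 → ℝ)} {u : Fn}

lemma differentiableAt_of_contDiffOn (hV : IsOpen V) (hu : ContDiffOn ℝ ∞ u V)
    {p : Fin 4 → ℝ} (hp : p ∈ V) : DifferentiableAt ℝ u p :=
  (hu.differentiableOn (by simp)).differentiableAt (hV.mem_nhds hp)

lemma contDiffOn_pd (hV : IsOpen V) (hu : ContDiffOn ℝ ∞ u V) (α : Fin 4) :
    ContDiffOn ℝ ∞ (pd α u) V :=
  (hu.fderiv_of_isOpen hV (m := ∞) le_rfl).clm_apply contDiffOn_const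

lemma contDiffOn_Zop (hV : IsOpen V) (hu : ContDiffOn ℝ ∞ u V) :
    ∀ z, ContDiffOn ℝ ∞ (Zop z u) V
  | .inl α => contDiffOn_pd hV hu α
  | .inr j => ((contDiff_apply ℝ ℝ 0).contDiffOn.mul (contDiffOn_pd hV hu j.succ)).add
      ((contDiff_apply ℝ ℝ j.succ).contDiffOn.mul (contDiffOn_pd hV hu 0))

lemma contDiffOn_ZI (hV : IsOpen V) (hu : ContDiffOn ℝ ∞ u V) :
    ∀ J, ContDiffOn ℝ ∞ (ZI J u) V
  | [] => hu
  | z :: J => contDiffOn_Zop hV (contDiffOn_ZI hV hu J) z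

lemma contDiffOn_db (hV : IsOpen V) (hVt : V ⊆ timePos) (hu : ContDiffOn ℝ ∞ u V)
    (b : Fin 3) : ContDiffOn ℝ ∞ (db b u) V :=
  (contDiffOn_pd hV hu b.succ).add
    (((contDiffOn_xOverT b).mono hVt).mul (contDiffOn_pd hV hu 0))

lemma contDiffOn_invTDt (hV : IsOpen V) (hVt : V ⊆ timePos) (hu : ContDiffOn ℝ ∞ u V) :
    ContDiffOn ℝ ∞ (invTDt u) V :=
  (contDiffOn_tInv.mono hVt).mul (contDiffOn_pd hV hu 0)

end Smooth

section Derivatives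

variable {u v : Fn} {p : Fin 4 → ℝ}

lemma pd_congr {V : Set (Fin 4 → ℝ)} (hV : IsOpen V) (h : Set.EqOn u v V) (hp : p ∈ V)
    (α : Fin 4) : pd α u p = pd α v p := by
  simp only [pd, (h.eventuallyEq_of_mem (hV.mem_nhds hp)).fderiv_eq]

lemma Zop_congr {V : Set (Fin 4 → ℝ)} (hV : IsOpen V) (h : Set.EqOn u v V) (z : Fin 4 ⊕ Fin 3) :
    Set.EqOn (Zop z u) (Zop z v) V := by
  intro p hp
  cases z <;> simp only [Zop, Lb, pd_congr hV h hp]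

lemma pd_add (hu : DifferentiableAt ℝ u p) (hv : DifferentiableAt ℝ v p) (α : Fin 4) :
    pd α (fun q => u q + v q) p = pd α u p + pd α v p := by
  simp [pd, fderiv_fun_add hu hv]

lemma pd_mul (hu : DifferentiableAt ℝ u p) (hv : DifferentiableAt ℝ v p) (α : Fin 4) :
    pd α (fun q => u q * v q) p = pd α u p * v p + u p * pd α v p := by
  simp only [pd, fderiv_fun_mul hu hv, add_apply, smul_apply, smul_eq_mul]
  ring

lemma pd_const (r : ℝ) (α : Fin 4) : pd α (fun _ => r) p = 0 := by
  simp [pd]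

lemma pd_coord (α β : Fin 4) : pd α (fun q => q β) p = if β = α then 1 else 0 := by
  simp [pd, (hasFDerivAt_apply β p).fderiv, Pi.single_apply]

lemma pd_comm (hu : ContDiffAt ℝ 2 u p) (α β : Fin 4) :
    pd α (pd β u) p = pd β (pd α u) p := by
  have hd : DifferentiableAt ℝ (fderiv ℝ u) p :=
    (hu.fderiv_right (m := 1) le_rfl).differentiableAt one_ne_zero
  have key : ∀ γ δ : Fin 4, pd γ (pd δ u) p
      = fderiv ℝ (fderiv ℝ u) p (Pi.single γ 1) (Pi.single δ 1) := by
    intro γ δ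
    change fderiv ℝ (fun q => fderiv ℝ u q (Pi.single δ 1)) p _ = _
    simp [fderiv_clm_apply hd (differentiableAt_const _)]
  rw [key, key, hu.isSymmSndFDerivAt (by simp)]

lemma differentiableAt_pd (hu : ContDiffAt ℝ 2 u p) (α : Fin 4) :
    DifferentiableAt ℝ (pd α u) p :=
  ((hu.fderiv_right (m := 1) le_rfl).differentiableAt one_ne_zero).clm_apply
    (differentiableAt_const _)

lemma Zop_add (hu : DifferentiableAt ℝ u p) (hv : DifferentiableAt ℝ v p) :
    ∀ z, Zop z (fun q => u q + v q) p = Zop z u p + Zop z v p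
  | .inl α => pd_add hu hv α
  | .inr j => by simp only [Zop, Lb, pd_add hu hv]; ring

lemma Zop_mul (hu : DifferentiableAt ℝ u p) (hv : DifferentiableAt ℝ v p) :
    ∀ z, Zop z (fun q => u q * v q) p = Zop z u p * v p + u p * Zop z v p
  | .inl α => pd_mul hu hv α
  | .inr j => by simp only [Zop, Lb, pd_mul hu hv]; ring

lemma Zop_const (r : ℝ) : ∀ z, Zop z (fun _ => r) p = 0
  | .inl α => pd_const r α
  | .inr j => by simp only [Zop, Lb, pd_const]; ring

end Derivatives

section Coefficients

variable {p : Fin 4 → ℝ}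

lemma xOverT_eq (b : Fin 3) : xOverT b = fun q => q b.succ * tInv q :=
  funext fun _ => div_eq_mul_inv _ _

lemma differentiableAt_tInv (hp : p 0 ≠ 0) : DifferentiableAt ℝ tInv p :=
  (differentiableAt_apply 0 p).inv hp

lemma differentiableAt_xOverT (hp : p 0 ≠ 0) (b : Fin 3) : DifferentiableAt ℝ (xOverT b) p := by
  rw [xOverT_eq]
  exact (differentiableAt_apply _ p).mul (differentiableAt_tInv hp)

lemma pd_tInv (hp : p 0 ≠ 0) (α : Fin 4) :
    pd α tInv p = -(if (0 : Fin 4) = α then 1 else 0) * tInv p ^ 2 := by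
  have h : HasFDerivAt tInv
      ((-(p 0 ^ 2)⁻¹) • ContinuousLinearMap.proj (R := ℝ) (φ := fun _ : Fin 4 => ℝ) 0) p :=
    (hasDerivAt_inv hp).comp_hasFDerivAt p (hasFDerivAt_apply 0 p)
  simp only [pd, h.fderiv, tInv]
  split_ifs <;> simp_all

lemma pd_xOverT (hp : p 0 ≠ 0) (b : Fin 3) (α : Fin 4) :
    pd α (xOverT b) p = ((if b.succ = α then 1 else 0)
      - (if (0 : Fin 4) = α then 1 else 0) * xOverT b p) * tInv p := by
  rw [xOverT_eq, pd_mul (differentiableAt_apply _ p) (differentiableAt_tInv hp), pd_coord,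
    pd_tInv hp]
  ring

lemma Lb_tInv (hp : p 0 ≠ 0) (j : Fin 3) : Lb j tInv p = -(xOverT j p * tInv p) := by
  simp only [Lb, pd_tInv hp, Fin.succ_ne_zero j |>.symm, if_false, if_true]
  simp only [xOverT, tInv]
  field_simp
  ring

lemma Lb_xOverT (hp : p 0 ≠ 0) (j b : Fin 3) :
    Lb j (xOverT b) p = (if b = j then 1 else 0) - xOverT j p * xOverT b p := by
  simp only [Lb, pd_xOverT hp, Fin.succ_inj, Fin.succ_ne_zero, (Fin.succ_ne_zero j).symm,
    if_false, if_true]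
  simp only [xOverT, tInv]
  field_simp
  ring

end Coefficients

inductive IsCoeff : Fn → Prop
  | const (r : ℝ) : IsCoeff fun _ => r
  | tInv : IsCoeff tInv
  | xOverT (b : Fin 3) : IsCoeff (xOverT b)
  | add {c d : Fn} : IsCoeff c → IsCoeff d → IsCoeff fun q => c q + d q
  | mul {c d : Fn} : IsCoeff c → IsCoeff d → IsCoeff fun q => c q * d q

namespace IsCoeff

variable {c d : Fn}

lemma neg (hc : IsCoeff c) : IsCoeff fun q => -c q := by
  simpa using mul (const (-1)) hc

lemma sub (hc : IsCoeff c) (hd : IsCoeff d) : IsCoeff fun q => c q - d q := by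
  simpa only [sub_eq_add_neg] using hc.add hd.neg

lemma contDiffOn (hc : IsCoeff c) : ContDiffOn ℝ ∞ c timePos := by
  induction hc with
  | const r => exact contDiffOn_const
  | tInv => exact contDiffOn_tInv
  | xOverT b => exact contDiffOn_xOverT b
  | add _ _ ihc ihd => exact ihc.add ihd
  | mul _ _ ihc ihd => exact ihc.mul ihd

lemma exists_bound (hc : IsCoeff c) : ∃ M, ∀ p ∈ futureCone, |c p| ≤ M := by
  induction hc with
  | const r => exact ⟨|r|, fun _ _ => le_rfl⟩
  | tInv => exact ⟨1, fun _ hp => abs_tInv_le_one hp⟩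
  | xOverT b => exact ⟨1, fun _ hp => abs_xOverT_le_one hp b⟩
  | add _ _ ihc ihd =>
    obtain ⟨M, hM⟩ := ihc
    obtain ⟨M', hM'⟩ := ihd
    exact ⟨M + M', fun p hp => (abs_add_le _ _).trans (add_le_add (hM p hp) (hM' p hp))⟩
  | mul _ _ ihc ihd =>
    obtain ⟨M, hM⟩ := ihc
    obtain ⟨M', hM'⟩ := ihd
    exact ⟨M * M', fun p hp => by
      rw [abs_mul]
      exact mul_le_mul (hM p hp) (hM' p hp) (abs_nonneg _) ((abs_nonneg _).trans (hM p hp))⟩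

lemma Zop_eqOn (hc : IsCoeff c) (z : Fin 4 ⊕ Fin 3) :
    ∃ c', IsCoeff c' ∧ Set.EqOn (Zop z c) c' timePos := by
  induction hc with
  | const r => exact ⟨fun _ => 0, const 0, fun p _ => Zop_const r z⟩
  | tInv =>
    rcases z with α | j
    · exact ⟨_, (const _).neg.mul (tInv.mul tInv), fun p hp => (pd_tInv hp.ne' α).trans (by ring)⟩
    · exact ⟨_, ((xOverT j).mul tInv).neg, fun p hp => Lb_tInv hp.ne' j⟩
  | xOverT b =>
    rcases z with α | j
    · exact ⟨_, ((const _).sub ((const _).mul (xOverT b))).mul tInv,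
        fun p hp => pd_xOverT hp.ne' b α⟩
    · exact ⟨_, (const _).sub ((xOverT j).mul (xOverT b)), fun p hp => Lb_xOverT hp.ne' j b⟩
  | @add c d hc hd ihc ihd =>
    obtain ⟨c', hc', hcc'⟩ := ihc
    obtain ⟨d', hd', hdd'⟩ := ihd
    refine ⟨_, hc'.add hd', fun p hp => ?_⟩
    rw [Zop_add (differentiableAt_of_contDiffOn isOpen_timePos hc.contDiffOn hp)
      (differentiableAt_of_contDiffOn isOpen_timePos hd.contDiffOn hp), hcc' hp, hdd' hp]
  | @mul c d hc hd ihc ihd =>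
    obtain ⟨c', hc', hcc'⟩ := ihc
    obtain ⟨d', hd', hdd'⟩ := ihd
    refine ⟨_, (hc'.mul hd).add (hc.mul hd'), fun p hp => ?_⟩
    rw [Zop_mul (differentiableAt_of_contDiffOn isOpen_timePos hc.contDiffOn hp)
      (differentiableAt_of_contDiffOn isOpen_timePos hd.contDiffOn hp), hcc' hp, hdd' hp]

end IsCoeff

section Commutators

variable {w : Fn} {p : Fin 4 → ℝ} (hw : ContDiffAt ℝ 2 w p)
include hw

lemma pd_Lb (α : Fin 4) (j : Fin 3) :
    pd α (Lb j w) p = Lb j (pd α w) p + (if (0 : Fin 4) = α then 1 else 0) * pd j.succ w p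
      + (if j.succ = α then 1 else 0) * pd 0 w p := by
  have hd := differentiableAt_pd hw
  have hx (β : Fin 4) : DifferentiableAt ℝ (fun q : Fin 4 → ℝ => q β) p :=
    differentiableAt_apply β p
  change pd α (fun q => q 0 * pd j.succ w q + q j.succ * pd 0 w q) p = _
  rw [pd_add ((hx 0).fun_mul (hd _)) ((hx _).fun_mul (hd 0)), pd_mul (hx 0) (hd _),
    pd_mul (hx _) (hd 0), pd_coord, pd_coord, pd_comm hw α, pd_comm hw α]
  simp only [Lb]
  ring

variable (hp : p 0 ≠ 0)
include hp

lemma pd_db (α : Fin 4) (b : Fin 3) :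
    pd α (db b w) p = db b (pd α w) p
      + ((if b.succ = α then 1 else 0) - (if (0 : Fin 4) = α then 1 else 0) * xOverT b p)
        * invTDt w p := by
  have hd := differentiableAt_pd hw
  change pd α (fun q => pd b.succ w q + xOverT b q * pd 0 w q) p = _
  rw [pd_add (hd _) ((differentiableAt_xOverT hp b).fun_mul (hd 0)),
    pd_mul (differentiableAt_xOverT hp b) (hd 0), pd_xOverT hp, pd_comm hw α, pd_comm hw α]
  simp only [db, invTDt, xOverT]
  ring

lemma Lb_db (j b : Fin 3) :
    Lb j (db b w) p = db b (Lb j w) p - xOverT b p * db j w p := by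
  have hδ : (if j.succ = b.succ then (1 : ℝ) else 0) = if b.succ = j.succ then 1 else 0 := by
    simp only [eq_comm]
  simp only [Lb, pd_db hw hp, db, pd_Lb hw, hδ, Fin.succ_ne_zero, (Fin.succ_ne_zero _).symm,
    if_true, if_false]
  rw [pd_comm hw j.succ b.succ, pd_comm hw 0 b.succ, pd_comm hw 0 j.succ]
  simp only [xOverT, invTDt, tInv]
  field_simp
  ring

lemma pd_invTDt (α : Fin 4) :
    pd α (invTDt w) p = invTDt (pd α w) p
      - (if (0 : Fin 4) = α then 1 else 0) * tInv p * invTDt w p := by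
  change pd α (fun q => tInv q * pd 0 w q) p = _
  rw [pd_mul (differentiableAt_tInv hp) (differentiableAt_pd hw 0), pd_tInv hp, pd_comm hw α]
  simp only [invTDt]
  ring

lemma Lb_invTDt (j : Fin 3) :
    Lb j (invTDt w) p = invTDt (Lb j w) p - tInv p * db j w p := by
  simp only [Lb, pd_invTDt hw hp, invTDt, pd_Lb hw, db, Fin.succ_ne_zero,
    (Fin.succ_ne_zero _).symm, if_true, if_false]
  rw [pd_comm hw 0 j.succ]
  simp only [tInv]
  field_simp
  ring

/-- Since `∂̄_b = t⁻¹ H_b`, the first two terms on the right make up `∂̄_b ∂̄_b w`, and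
`∂̄_b (x^b/t) = (1 - (x^b/t)²) t⁻¹`. -/
lemma invTDt_identity (b : Fin 3) :
    (1 - xOverT b p ^ 2) * invTDt w p
      = tInv p * db b (Lb b w) p - tInv p * xOverT b p * db b w p
        - db b (pd b.succ w) p - xOverT b p * db b (pd 0 w) p := by
  simp only [db, pd_Lb hw, Lb, Fin.succ_ne_zero, (Fin.succ_ne_zero _).symm, if_true, if_false]
  rw [pd_comm hw 0 b.succ]
  simp only [xOverT, invTDt, tInv]
  field_simp
  ring

end Commutators

def PreservesSmooth (T : Op) : Prop :=
  ∀ ⦃V : Set (Fin 4 → ℝ)⦄ ⦃u : Fn⦄, IsOpen V → V ⊆ timePos → ContDiffOn ℝ ∞ u V →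
    ContDiffOn ℝ ∞ (T u) V

def AgreeOnSmooth (T T' : Op) : Prop :=
  ∀ ⦃V : Set (Fin 4 → ℝ)⦄ ⦃u : Fn⦄, IsOpen V → V ⊆ timePos → ContDiffOn ℝ ∞ u V →
    Set.EqOn (T u) (T' u) V

def BoundedBy (N T : Op) : Prop :=
  ∃ C, ∀ ⦃V : Set (Fin 4 → ℝ)⦄ ⦃u : Fn⦄, IsOpen V → V ⊆ timePos → ContDiffOn ℝ ∞ u V →
    ∀ p ∈ V ∩ futureCone, |T u p| ≤ C * N u p

inductive LinComb (S : Op → Prop) : Op → Prop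
  | atom {T : Op} : S T → LinComb S T
  | zero : LinComb S fun _ _ => 0
  | add {T T' : Op} : LinComb S T → LinComb S T' → LinComb S fun u q => T u q + T' u q
  | smul {c : Fn} {T : Op} : IsCoeff c → LinComb S T → LinComb S fun u q => c q * T u q

namespace LinComb

variable {S S' : Op → Prop} {T : Op}

lemma mono (hS : ∀ T, S T → S' T) (hT : LinComb S T) : LinComb S' T := by
  induction hT with
  | atom h => exact atom (hS _ h)
  | zero => exact zero
  | add _ _ ih ih' => exact ih.add ih'
  | smul hc _ ih => exact ih.smul hc

lemma preservesSmooth (hS : ∀ T, S T → PreservesSmooth T) (hT : LinComb S T) :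
    PreservesSmooth T := by
  induction hT with
  | atom h => exact hS _ h
  | zero => exact fun _ _ _ _ _ => contDiffOn_const
  | add _ _ ih ih' => exact fun V u hV hVt hu => (ih hV hVt hu).add (ih' hV hVt hu)
  | smul hc _ ih => exact fun V u hV hVt hu => (hc.contDiffOn.mono hVt).mul (ih hV hVt hu)

lemma boundedBy {N : Op} (hS : ∀ T, S T → BoundedBy N T) (hT : LinComb S T) :
    BoundedBy N T := by
  induction hT with
  | atom h => exact hS _ h
  | zero => exact ⟨0, fun _ _ _ _ _ _ _ => by simp⟩
  | add _ _ ih ih' =>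
    obtain ⟨C, hC⟩ := ih
    obtain ⟨C', hC'⟩ := ih'
    refine ⟨C + C', fun V u hV hVt hu p hp => ?_⟩
    rw [add_mul]
    exact (abs_add_le _ _).trans (add_le_add (hC hV hVt hu p hp) (hC' hV hVt hu p hp))
  | smul hc _ ih =>
    obtain ⟨M, hM⟩ := hc.exists_bound
    obtain ⟨C, hC⟩ := ih
    refine ⟨M * C, fun V u hV hVt hu p hp => ?_⟩
    rw [abs_mul, mul_assoc]
    exact mul_le_mul (hM p hp.2) (hC hV hVt hu p hp) (abs_nonneg _)
      ((abs_nonneg _).trans (hM p hp.2))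

lemma Zop_comp (hSS' : ∀ T, S T → S' T) (hS : ∀ T, S T → PreservesSmooth T)
    (hZ : ∀ T, S T → ∀ z, ∃ T', LinComb S' T' ∧ AgreeOnSmooth (Zop z ∘ T) T')
    (hT : LinComb S T) (z : Fin 4 ⊕ Fin 3) :
    ∃ T', LinComb S' T' ∧ AgreeOnSmooth (Zop z ∘ T) T' := by
  induction hT with
  | atom h => exact hZ _ h z
  | zero => exact ⟨_, zero, fun _ _ _ _ _ _ _ => Zop_const 0 z⟩
  | @add T₁ T₂ h₁ h₂ ih₁ ih₂ =>
    obtain ⟨T₁', hT₁', hZ₁⟩ := ih₁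
    obtain ⟨T₂', hT₂', hZ₂⟩ := ih₂
    refine ⟨_, hT₁'.add hT₂', fun V u hV hVt hu p hp => ?_⟩
    simp only [Function.comp_apply]
    rw [Zop_add (differentiableAt_of_contDiffOn hV (h₁.preservesSmooth hS hV hVt hu) hp)
      (differentiableAt_of_contDiffOn hV (h₂.preservesSmooth hS hV hVt hu) hp)]
    exact congr($(hZ₁ hV hVt hu hp) + $(hZ₂ hV hVt hu hp))
  | @smul c T₁ hc h₁ ih =>
    obtain ⟨T₁', hT₁', hZ₁⟩ := ih
    obtain ⟨c', hc', hcc'⟩ := hc.Zop_eqOn z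
    refine ⟨_, (h₁.mono hSS' |>.smul hc').add (hT₁'.smul hc), fun V u hV hVt hu p hp => ?_⟩
    simp only [Function.comp_apply]
    rw [Zop_mul (differentiableAt_of_contDiffOn isOpen_timePos hc.contDiffOn (hVt hp))
      (differentiableAt_of_contDiffOn hV (h₁.preservesSmooth hS hV hVt hu) hp),
      hcc' (hVt hp)]
    exact congr(c' p * T₁ u p + c p * $(hZ₁ hV hVt hu hp))

end LinComb

def sumLengthLT {α : Type*} [Fintype α] (m : ℕ) (F : List α → ℝ) : ℝ :=
  ∑ k ∈ Finset.range m, ∑ K : Fin k → α, F (List.ofFn K)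

lemma sumLengthLT_nonneg {α : Type*} [Fintype α] {F : List α → ℝ} (hF : ∀ K, 0 ≤ F K) (m : ℕ) :
    0 ≤ sumLengthLT m F :=
  Finset.sum_nonneg fun _ _ => Finset.sum_nonneg fun _ _ => hF _

lemma le_sumLengthLT {α : Type*} [Fintype α] {F : List α → ℝ} (hF : ∀ K, 0 ≤ F K) {m : ℕ}
    {K : List α} (hK : K.length < m) : F K ≤ sumLengthLT m F :=
  calc F K = F (List.ofFn K.get) := by rw [List.ofFn_get]
    _ ≤ ∑ K' : Fin K.length → α, F (List.ofFn K') :=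
      Finset.single_le_sum (f := fun K' : Fin K.length → α => F (List.ofFn K'))
        (fun _ _ => hF _) (Finset.mem_univ _)
    _ ≤ sumLengthLT m F :=
      Finset.single_le_sum (f := fun k => ∑ K' : Fin k → α, F (List.ofFn K'))
        (fun _ _ => Finset.sum_nonneg fun _ _ => hF _) (Finset.mem_range.mpr hK)

def tangentialSum (n : ℕ) : Op :=
  fun u p => sumLengthLT (n + 1) fun K => ∑ j : Fin 3, |db j (ZI K u) p|

def gradientSum (m : ℕ) : Op :=
  fun u p => sumLengthLT m fun K => ∑ β : Fin 4, |pd β (ZI K u) p|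

lemma tangentialSum_nonneg (n : ℕ) (u : Fn) (p : Fin 4 → ℝ) : 0 ≤ tangentialSum n u p :=
  sumLengthLT_nonneg (fun _ => Finset.sum_nonneg fun _ _ => abs_nonneg _) _

lemma gradientSum_nonneg (m : ℕ) (u : Fn) (p : Fin 4 → ℝ) : 0 ≤ gradientSum m u p :=
  sumLengthLT_nonneg (fun _ => Finset.sum_nonneg fun _ _ => abs_nonneg _) _

lemma abs_db_le_tangentialSum {n : ℕ} {K : List (Fin 4 ⊕ Fin 3)} (hK : K.length ≤ n) (u : Fn)
    (p : Fin 4 → ℝ) (j : Fin 3) : |db j (ZI K u) p| ≤ tangentialSum n u p :=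
  (Finset.single_le_sum (f := fun j => |db j (ZI K u) p|) (fun _ _ => abs_nonneg _)
    (Finset.mem_univ j)).trans
    (le_sumLengthLT (F := fun K => ∑ j : Fin 3, |db j (ZI K u) p|)
      (fun _ => Finset.sum_nonneg fun _ _ => abs_nonneg _) (Nat.lt_succ_of_le hK))

lemma abs_pd_le_gradientSum {m : ℕ} {K : List (Fin 4 ⊕ Fin 3)} (hK : K.length < m) (u : Fn)
    (p : Fin 4 → ℝ) (β : Fin 4) : |pd β (ZI K u) p| ≤ gradientSum m u p :=
  (Finset.single_le_sum (f := fun β => |pd β (ZI K u) p|) (fun _ _ => abs_nonneg _)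
    (Finset.mem_univ β)).trans
    (le_sumLengthLT (F := fun K => ∑ β : Fin 4, |pd β (ZI K u) p|)
      (fun _ => Finset.sum_nonneg fun _ _ => abs_nonneg _) hK)

lemma abs_sub_sub_sub_le {g x A B C D : ℝ} (hg : |g| ≤ 1) (hx : |x| ≤ 1) :
    |g * A - g * x * B - C - x * D| ≤ |A| + |B| + |C| + |D| := by
  have h₁ : |g * A| ≤ |A| := by
    rw [abs_mul]; exact mul_le_of_le_one_left (abs_nonneg _) hg
  have h₂ : |g * x * B| ≤ |B| := by
    rw [abs_mul, abs_mul]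
    exact mul_le_of_le_one_left (abs_nonneg _) (mul_le_one₀ hg (abs_nonneg _) hx)
  have h₃ : |x * D| ≤ |D| := by
    rw [abs_mul]; exact mul_le_of_le_one_left (abs_nonneg _) hx
  refine abs_le.mpr ⟨?_, ?_⟩ <;>
    linarith [le_abs_self (g * A), neg_abs_le (g * A), le_abs_self (g * x * B),
      neg_abs_le (g * x * B), le_abs_self C, neg_abs_le C, le_abs_self (x * D), neg_abs_le (x * D)]

lemma abs_invTDt_le {w : Fn} {p : Fin 4 → ℝ} (hw : ContDiffAt ℝ 2 w p) (hp : p ∈ futureCone) :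
    |invTDt w p| ≤ ∑ b : Fin 3, (|db b (Lb b w) p| + |db b w p| + |db b (pd b.succ w) p|
      + |db b (pd 0 w) p|) := by
  have hsum : (3 - ∑ b : Fin 3, xOverT b p ^ 2) * invTDt w p
      = ∑ b : Fin 3, (tInv p * db b (Lb b w) p - tInv p * xOverT b p * db b w p
        - db b (pd b.succ w) p - xOverT b p * db b (pd 0 w) p) := by
    rw [← Finset.sum_congr rfl fun b _ => invTDt_identity hw (pos_of_mem_futureCone hp).ne' b,
      ← Finset.sum_mul, Finset.sum_sub_distrib]
    norm_num
  have hcoeff : 2 ≤ 3 - ∑ b : Fin 3, xOverT b p ^ 2 := by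
    linarith [sum_sq_xOverT_le_one hp]
  calc |invTDt w p| ≤ (3 - ∑ b : Fin 3, xOverT b p ^ 2) * |invTDt w p| := by
        nlinarith [abs_nonneg (invTDt w p)]
    _ = |∑ b : Fin 3, (tInv p * db b (Lb b w) p - tInv p * xOverT b p * db b w p
        - db b (pd b.succ w) p - xOverT b p * db b (pd 0 w) p)| := by
        rw [← hsum, abs_mul, abs_of_nonneg (a := 3 - ∑ b : Fin 3, xOverT b p ^ 2) (by linarith)]
    _ ≤ _ := (Finset.abs_sum_le_sum_abs _ _).trans (Finset.sum_le_sum fun b _ =>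
        abs_sub_sub_sub_le (abs_tInv_le_one hp) (abs_xOverT_le_one hp b))

lemma contDiffAt_ZI {V : Set (Fin 4 → ℝ)} {u : Fn} (hV : IsOpen V) (hu : ContDiffOn ℝ ∞ u V)
    {p : Fin 4 → ℝ} (hp : p ∈ V) (K : List (Fin 4 ⊕ Fin 3)) : ContDiffAt ℝ 2 (ZI K u) p :=
  ((contDiffOn_ZI hV hu K).contDiffAt (hV.mem_nhds hp)).of_le (WithTop.coe_le_coe.mpr le_top)

inductive TangentialAtom (n : ℕ) : Op → Prop
  | tangential (b : Fin 3) (K : List (Fin 4 ⊕ Fin 3)) :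
      K.length ≤ n → TangentialAtom n (db b ∘ ZI K)
  | timeDeriv (K : List (Fin 4 ⊕ Fin 3)) : K.length < n → TangentialAtom n (invTDt ∘ ZI K)

namespace TangentialAtom

variable {n : ℕ} {T : Op}

lemma succ (h : TangentialAtom n T) : TangentialAtom (n + 1) T := by
  cases h with
  | tangential b K hK => exact tangential b K (by omega)
  | timeDeriv K hK => exact timeDeriv K (by omega)

lemma preservesSmooth (h : TangentialAtom n T) : PreservesSmooth T := by
  cases h with
  | tangential b K _ => exact fun V u hV hVt hu => contDiffOn_db hV hVt (contDiffOn_ZI hV hu K) b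
  | timeDeriv K _ => exact fun V u hV hVt hu => contDiffOn_invTDt hV hVt (contDiffOn_ZI hV hu K)

lemma Zop_comp (h : TangentialAtom n T) :
    ∀ z, ∃ T', LinComb (TangentialAtom (n + 1)) T' ∧ AgreeOnSmooth (Zop z ∘ T) T' := by
  cases h with
  | tangential b K hK =>
    rintro (α | j)
    · refine ⟨_, (LinComb.atom (tangential b (.inl α :: K) (by simpa using hK))).add
        ((LinComb.atom (timeDeriv K (by omega))).smul
          ((IsCoeff.const (if b.succ = α then 1 else 0)).sub
            ((IsCoeff.const (if (0 : Fin 4) = α then 1 else 0)).mul (IsCoeff.xOverT b)))),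
        fun V u hV hVt hu p hp => ?_⟩
      exact pd_db (contDiffAt_ZI hV hu hp K) (hVt hp).ne' α b
    · refine ⟨_, (LinComb.atom (tangential b (.inr j :: K) (by simpa using hK))).add
        ((LinComb.atom (tangential j K (by omega))).smul (IsCoeff.xOverT b).neg),
        fun V u hV hVt hu p hp => ?_⟩
      exact (Lb_db (contDiffAt_ZI hV hu hp K) (hVt hp).ne' j b).trans
        (by simp only [Function.comp_apply, ZI, Zop]; ring)
  | timeDeriv K hK =>
    rintro (α | j)
    · refine ⟨_, (LinComb.atom (timeDeriv (.inl α :: K) (by simpa using hK))).add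
        ((LinComb.atom (timeDeriv K (by omega))).smul
          ((IsCoeff.const (if (0 : Fin 4) = α then 1 else 0)).mul IsCoeff.tInv).neg),
        fun V u hV hVt hu p hp => ?_⟩
      exact (pd_invTDt (contDiffAt_ZI hV hu hp K) (hVt hp).ne' α).trans
        (by simp only [Function.comp_apply, ZI, Zop]; ring)
    · refine ⟨_, (LinComb.atom (timeDeriv (.inr j :: K) (by simpa using hK))).add
        ((LinComb.atom (tangential j K (by omega))).smul IsCoeff.tInv.neg),
        fun V u hV hVt hu p hp => ?_⟩
      exact (Lb_invTDt (contDiffAt_ZI hV hu hp K) (hVt hp).ne' j).trans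
        (by simp only [Function.comp_apply, ZI, Zop]; ring)

lemma boundedBy (h : TangentialAtom n T) : BoundedBy (tangentialSum n) T := by
  cases h with
  | tangential b K hK =>
    exact ⟨1, fun V u _ _ _ p _ => by simpa using abs_db_le_tangentialSum hK u p b⟩
  | timeDeriv K hK =>
    refine ⟨12, fun V u hV _ hu p hp => ?_⟩
    have hle (K' : List (Fin 4 ⊕ Fin 3)) (hK' : K'.length ≤ K.length + 1) (j : Fin 3) :
        |db j (ZI K' u) p| ≤ tangentialSum n u p :=
      abs_db_le_tangentialSum (by omega) u p j
    calc |invTDt (ZI K u) p| ≤ ∑ _b : Fin 3, 4 * tangentialSum n u p :=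
          (abs_invTDt_le (contDiffAt_ZI hV hu hp.1 K) hp.2).trans (Finset.sum_le_sum fun b _ => by
            have h₁ : |db b (Lb b (ZI K u)) p| ≤ _ := hle (.inr b :: K) (by simp) b
            have h₂ : |db b (pd b.succ (ZI K u)) p| ≤ _ := hle (.inl b.succ :: K) (by simp) b
            have h₃ : |db b (pd 0 (ZI K u)) p| ≤ _ := hle (.inl 0 :: K) (by simp) b
            linarith [hle K (by simp) b])
      _ = 12 * tangentialSum n u p := by
          simp only [Finset.sum_const, Finset.card_univ, Fintype.card_fin, nsmul_eq_mul]
          ring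

end TangentialAtom

lemma exists_ZI_db_eq_linComb (J : List (Fin 4 ⊕ Fin 3)) (i : Fin 3) :
    ∃ T, LinComb (TangentialAtom J.length) T ∧ AgreeOnSmooth (ZI J ∘ db i) T := by
  induction J with
  | nil => exact ⟨_, .atom (.tangential i [] le_rfl), fun _ _ _ _ _ _ _ => rfl⟩
  | cons z J ih =>
    obtain ⟨T, hT, hJ⟩ := ih
    obtain ⟨T', hT', hZ⟩ := hT.Zop_comp (fun _ h => h.succ) (fun _ h => h.preservesSmooth)
      (fun _ h => h.Zop_comp) z
    exact ⟨T', hT', fun V u hV hVt hu p hp =>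
      (Zop_congr hV (hJ hV hVt hu) z hp).trans (hZ hV hVt hu hp)⟩

inductive LowerAtom (m : ℕ) : Op → Prop
  | gradient (β : Fin 4) (K : List (Fin 4 ⊕ Fin 3)) : K.length < m → LowerAtom m (pd β ∘ ZI K)

lemma exists_Zop_pd_eq_add_linComb (z : Fin 4 ⊕ Fin 3) (β : Fin 4) (K : List (Fin 4 ⊕ Fin 3)) :
    ∃ T, LinComb (LowerAtom (K.length + 1)) T ∧
      AgreeOnSmooth (Zop z ∘ pd β ∘ ZI K) fun u q => pd β (ZI (z :: K) u) q + T u q := by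
  rcases z with γ | j
  · exact ⟨_, .zero, fun V u hV _ hu p hp =>
      (pd_comm (contDiffAt_ZI hV hu hp K) γ β).trans (add_zero _).symm⟩
  · refine ⟨_, ((LinComb.atom (.gradient j.succ K (by omega))).smul
        (IsCoeff.const (-if (0 : Fin 4) = β then 1 else 0))).add
      ((LinComb.atom (.gradient 0 K (by omega))).smul
        (IsCoeff.const (-if j.succ = β then 1 else 0))), fun V u hV _ hu p hp => ?_⟩
    simp only [Function.comp_apply, ZI, Zop, pd_Lb (contDiffAt_ZI hV hu hp K)]
    ring

namespace LowerAtom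

variable {m : ℕ} {T : Op}

lemma succ (h : LowerAtom m T) : LowerAtom (m + 1) T := by
  cases h with
  | gradient β K hK => exact gradient β K (by omega)

lemma preservesSmooth (h : LowerAtom m T) : PreservesSmooth T := by
  cases h with
  | gradient β K _ => exact fun V u hV _ hu => contDiffOn_pd hV (contDiffOn_ZI hV hu K) β

lemma Zop_comp (h : LowerAtom m T) (z : Fin 4 ⊕ Fin 3) :
    ∃ T', LinComb (LowerAtom (m + 1)) T' ∧ AgreeOnSmooth (Zop z ∘ T) T' := by
  cases h with
  | gradient β K hK =>
    obtain ⟨T, hT, hagree⟩ := exists_Zop_pd_eq_add_linComb z β K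
    exact ⟨_, (LinComb.atom (gradient β (z :: K) (by simpa using hK))).add
      (hT.mono fun _ h => by cases h; exact gradient _ _ (by omega)), hagree⟩

lemma boundedBy (h : LowerAtom m T) : BoundedBy (gradientSum m) T := by
  cases h with
  | gradient β K hK =>
    exact ⟨1, fun V u _ _ _ p _ => by simpa using abs_pd_le_gradientSum hK u p β⟩

end LowerAtom

lemma exists_ZI_pd_eq_add_linComb (J : List (Fin 4 ⊕ Fin 3)) (α : Fin 4) :
    ∃ T, LinComb (LowerAtom J.length) T ∧
      AgreeOnSmooth (ZI J ∘ pd α) fun u q => pd α (ZI J u) q + T u q := by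
  induction J with
  | nil => exact ⟨_, .zero, fun _ _ _ _ _ _ _ => (add_zero _).symm⟩
  | cons z J ih =>
    obtain ⟨T, hT, hJ⟩ := ih
    obtain ⟨C, hC, hcomm⟩ := exists_Zop_pd_eq_add_linComb z α J
    obtain ⟨T', hT', hZ⟩ := hT.Zop_comp (fun _ h => h.succ) (fun _ h => h.preservesSmooth)
      (fun _ h => h.Zop_comp) z
    refine ⟨_, hC.add hT', fun V u hV hVt hu p hp => ?_⟩
    have hd₁ := differentiableAt_pd (contDiffAt_ZI hV hu hp J) α
    have hd₂ := differentiableAt_of_contDiffOn hV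
      (hT.preservesSmooth (fun _ h => h.preservesSmooth) hV hVt hu) hp
    calc Zop z (ZI J (pd α u)) p = Zop z (fun q => pd α (ZI J u) q + T u q) p :=
          Zop_congr hV (hJ hV hVt hu) z hp
      _ = Zop z (pd α (ZI J u)) p + Zop z (T u) p := Zop_add hd₁ hd₂ z
      _ = pd α (ZI (z :: J) u) p + C u p + T' u p :=
          congr($(hcomm hV hVt hu hp) + $(hZ hV hVt hu hp))
      _ = _ := add_assoc _ _ _

lemma BoundedBy.congr {N T T' : Op} (h : AgreeOnSmooth T T') (hT' : BoundedBy N T') :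
    BoundedBy N T := by
  obtain ⟨C, hC⟩ := hT'
  exact ⟨C, fun V u hV hVt hu p hp => by rw [h hV hVt hu hp.1]; exact hC hV hVt hu p hp⟩

lemma ZI_db_boundedBy (J : List (Fin 4 ⊕ Fin 3)) (i : Fin 3) :
    BoundedBy (tangentialSum J.length) (ZI J ∘ db i) := by
  obtain ⟨T, hT, hagree⟩ := exists_ZI_db_eq_linComb J i
  exact .congr hagree (hT.boundedBy fun _ h => h.boundedBy)

lemma ZI_pd_sub_boundedBy (J : List (Fin 4 ⊕ Fin 3)) (α : Fin 4) :
    BoundedBy (gradientSum J.length) fun u q => ZI J (pd α u) q - pd α (ZI J u) q := by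
  obtain ⟨T, hT, hagree⟩ := exists_ZI_pd_eq_add_linComb J α
  refine .congr (T' := T) (fun V u hV hVt hu p hp => ?_) (hT.boundedBy fun _ h => h.boundedBy)
  exact sub_eq_of_eq_add' (hagree hV hVt hu hp)

lemma exists_bound_tangential (n : ℕ) :
    ∃ C, ∀ ⦃V : Set (Fin 4 → ℝ)⦄ ⦃u : Fn⦄, IsOpen V → V ⊆ timePos → ContDiffOn ℝ ∞ u V →
      ∀ p ∈ V ∩ futureCone, ∑ i : Fin 3, ∑ J : Fin n → Fin 4 ⊕ Fin 3,
        |ZI (List.ofFn J) (db i u) p| ≤ C * tangentialSum n u p := by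
  choose C hC using fun i J => List.length_ofFn (f := J) ▸ ZI_db_boundedBy (List.ofFn J) i
  refine ⟨∑ i, ∑ J, C i J, fun V u hV hVt hu p hp => ?_⟩
  simp only [Finset.sum_mul]
  exact Finset.sum_le_sum fun i _ => Finset.sum_le_sum fun J _ => hC i J hV hVt hu p hp

lemma exists_bound_commutator (n : ℕ) :
    ∃ C, ∀ ⦃V : Set (Fin 4 → ℝ)⦄ ⦃u : Fn⦄, IsOpen V → V ⊆ timePos → ContDiffOn ℝ ∞ u V →
      ∀ p ∈ V ∩ futureCone, ∀ m ≤ n, ∀ (I : Fin m → Fin 4 ⊕ Fin 3) (α : Fin 4),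
        |ZI (List.ofFn I) (pd α u) p - pd α (ZI (List.ofFn I) u) p|
          ≤ C * gradientSum m u p := by
  choose C hC using fun (x : (m : Fin (n + 1)) × (Fin m → Fin 4 ⊕ Fin 3) × Fin 4) =>
    List.length_ofFn (f := x.2.1) ▸ ZI_pd_sub_boundedBy (List.ofFn x.2.1) x.2.2
  obtain ⟨M, hM⟩ := Finite.exists_le C
  refine ⟨M, fun V u hV hVt hu p hp m hm I α => ?_⟩
  exact (hC ⟨⟨m, Nat.lt_succ_of_le hm⟩, I, α⟩ hV hVt hu p hp).trans
    (mul_le_mul_of_nonneg_right (hM _) (gradientSum_nonneg m u p))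

lemma mem_futureCone_of_rad_le {p : Fin 4 → ℝ} (h : rad p ≤ p 0 - 1) : p ∈ futureCone := by
  have hrad : 0 ≤ rad p := Real.sqrt_nonneg _
  have hsq : rad p ^ 2 = ∑ i : Fin 3, p i.succ ^ 2 :=
    Real.sq_sqrt (Finset.sum_nonneg fun _ _ => sq_nonneg _)
  exact ⟨by linarith, by nlinarith⟩

end ZCommutator

open ZCommutator

theorem Z_commutator_estimates_general (B : ℝ) (plen : ℕ) :
    ∃ C > (0 : ℝ),
      ∀ U : Set (Fin 4 → ℝ), IsOpen U →
      ∀ u : (Fin 4 → ℝ) → ℝ, ContDiffOn ℝ (⊤ : ℕ∞) u U →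
      ∀ p ∈ U, rad p ≤ p 0 - 1 → (B + 1) ^ 2 ≤ (p 0) ^ 2 - rad p ^ 2 →
        (∑ i : Fin 3, ∑ J : Fin plen → Fin 4 ⊕ Fin 3, |ZI (List.ofFn J) (db i u) p|
          ≤ C * ∑ k ∈ Finset.range (plen + 1), ∑ K : Fin k → Fin 4 ⊕ Fin 3,
              ∑ j : Fin 3, |db j (ZI (List.ofFn K) u) p|)
        ∧ (∀ m : ℕ, m ≤ plen → ∀ I : Fin m → Fin 4 ⊕ Fin 3, ∀ α : Fin 4,
            |ZI (List.ofFn I) (pd α u) p|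
              ≤ |pd α (ZI (List.ofFn I) u) p|
                + C * ∑ k ∈ Finset.range m, ∑ J : Fin k → Fin 4 ⊕ Fin 3,
                    ∑ β : Fin 4, |pd β (ZI (List.ofFn J) u) p|) := by
  obtain ⟨Ca, hCa⟩ := exists_bound_tangential plen
  obtain ⟨Cb, hCb⟩ := exists_bound_commutator plen
  refine ⟨|Ca| + |Cb| + 1, by positivity, fun U hU u hu p hpU hrad _ => ?_⟩
  have hV := hU.inter isOpen_timePos
  have hu' := hu.mono (Set.inter_subset_left (t := timePos))
  have hp : p ∈ (U ∩ timePos) ∩ futureCone :=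
    ⟨⟨hpU, pos_of_mem_futureCone (mem_futureCone_of_rad_le hrad)⟩, mem_futureCone_of_rad_le hrad⟩
  refine ⟨(hCa hV Set.inter_subset_right hu' p hp).trans ?_, fun m hm I α => ?_⟩
  · exact mul_le_mul_of_nonneg_right (by linarith [le_abs_self Ca, abs_nonneg Cb])
      (tangentialSum_nonneg plen u p)
  · have hsub := hCb hV Set.inter_subset_right hu' p hp m hm I α
    have hC : Cb * gradientSum m u p ≤ (|Ca| + |Cb| + 1) * gradientSum m u p :=
      mul_le_mul_of_nonneg_right (by linarith [le_abs_self Cb, abs_nonneg Ca])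
        (gradientSum_nonneg m u p)
    have htri := abs_sub_abs_le_abs_sub (ZI (List.ofFn I) (pd α u) p) (pd α (ZI (List.ofFn I) u) p)
    change _ ≤ _ + (|Ca| + |Cb| + 1) * gradientSum m u p
    linarith

/-- commutator estimates for the full family of fields `Z` in the
region `{|x| ≤ t - 1, t² - |x|² ≥ (B+1)²}`:
(a) `Σ_i Σ_{|J| = p} |Z^J ∂̄_i u| ≤ C Σ_{|K| ≤ p} Σ_j |∂̄_j Z^K u|`;
(b) `|Z^I ∂_α u| ≤ |∂_α Z^I u| + C Σ_{|J| < |I|} Σ_β |∂_β Z^J u|` for `|I| ≤ p`. -/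
theorem Z_commutator_estimates (B : ℝ) (hB : 0 < B) (plen : ℕ) (hp : 1 ≤ plen) :
    ∃ C > (0 : ℝ),
      ∀ U : Set (Fin 4 → ℝ), IsOpen U →
      ∀ u : (Fin 4 → ℝ) → ℝ, ContDiffOn ℝ (⊤ : ℕ∞) u U →
      ∀ p ∈ U, rad p ≤ p 0 - 1 → (B + 1) ^ 2 ≤ (p 0) ^ 2 - rad p ^ 2 →
        (∑ i : Fin 3, ∑ J : Fin plen → Fin 4 ⊕ Fin 3, |ZI (List.ofFn J) (db i u) p|
          ≤ C * ∑ k ∈ Finset.range (plen + 1), ∑ K : Fin k → Fin 4 ⊕ Fin 3,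
              ∑ j : Fin 3, |db j (ZI (List.ofFn K) u) p|)
        ∧ (∀ m : ℕ, m ≤ plen → ∀ I : Fin m → Fin 4 ⊕ Fin 3, ∀ α : Fin 4,
            |ZI (List.ofFn I) (pd α u) p|
              ≤ |pd α (ZI (List.ofFn I) u) p|
                + C * ∑ k ∈ Finset.range m, ∑ J : Fin k → Fin 4 ⊕ Fin 3,
                    ∑ β : Fin 4, |pd β (ZI (List.ofFn J) u) p|) :=
  Z_commutator_estimates_general B plen
end
end
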